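/- arXiv:1303.0657 — 5 statements merged into one kernel-verified Lean document; each statement's English description precedes it below -/
import Mathlib

section
/- If every set F in a family 𝓕 ⊆ 2^[n] satisfies |F ∩ [j]| ≥ (j+t)/2 for some j ∈ [n] (i.e., the lattice walk associated to F hits the line y = x + t), then the p-biased measure μ_p(𝓕) = Σ_{F∈𝓕} p^|F| (1-p)^(n-|F|) is at most (p/(1-p))^t. -/
open Finset

/-- Any subfamily of the powerset of `S` has `p`-biased measure at most 1. -/
lemma measure_le_one (p : ℝ) (hp0 : 0 ≤ p) (hp1 : p ≤ 1) (S : Finset ℕ)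
    (𝓖 : Finset (Finset ℕ)) (h : ∀ G ∈ 𝓖, G ⊆ S) :
    ∑ G ∈ 𝓖, p ^ G.card * (1 - p) ^ (S.card - G.card) ≤ 1 := by
  have h1 : ∑ G ∈ 𝓖, p ^ G.card * (1 - p) ^ (S.card - G.card)
      ≤ ∑ G ∈ S.powerset, p ^ G.card * (1 - p) ^ (S.card - G.card) := by
    apply Finset.sum_le_sum_of_subset_of_nonneg
    · intro G hG; exact Finset.mem_powerset.mpr (h G hG)
    · intro G _ _
      exact mul_nonneg (pow_nonneg hp0 _) (pow_nonneg (by linarith) _)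
  have e := Finset.prod_add (fun _ : ℕ => p) (fun _ : ℕ => 1 - p) S
  simp only [Finset.prod_const] at e
  have h2 : ∑ G ∈ S.powerset, p ^ G.card * (1 - p) ^ (S.card - G.card) = 1 := by
    have e2 : ∑ G ∈ S.powerset, p ^ G.card * (1 - p) ^ (S.card - G.card)
        = ∑ G ∈ S.powerset, p ^ G.card * (1 - p) ^ ((S \ G).card) := by
      apply Finset.sum_congr rfl
      intro G hG
      rw [Finset.card_sdiff_of_subset (Finset.mem_powerset.mp hG)]
    rw [e2, ← e]
    rw [show p + (1 - p) = 1 by ring, one_pow]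
  linarith

lemma main_lemma (p : ℝ) (hp0 : 0 < p) (hp1 : p < 1) :
    ∀ (n a t : ℕ), 1 ≤ t → ∀ 𝓕 : Finset (Finset ℕ),
    (∀ F ∈ 𝓕, F ⊆ Finset.Icc (a + 1) (a + n)) →
    (∀ F ∈ 𝓕, ∃ j ∈ Finset.Icc 1 n, j + t ≤ 2 * (F ∩ Finset.Icc (a + 1) (a + j)).card) →
    ∑ F ∈ 𝓕, p ^ F.card * (1 - p) ^ (n - F.card) ≤ (p / (1 - p)) ^ t := by
  have hq : (0:ℝ) < 1 - p := by linarith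
  have hqne : (1:ℝ) - p ≠ 0 := hq.ne'
  have key : p + (1 - p) * (p / (1 - p)) ^ 2 = p / (1 - p) := by
    field_simp
    ring
  intro n
  induction n with
  | zero =>
      intro a t ht 𝓕 hsub hhit
      have h𝓕 : 𝓕 = ∅ := by
        apply Finset.eq_empty_of_forall_notMem
        intro F hF
        obtain ⟨j, hj, _⟩ := hhit F hF
        rw [Finset.mem_Icc] at hj
        omega
      subst h𝓕
      simp only [Finset.sum_empty]
      positivity
  | succ n ih =>
      intro a t ht 𝓕 hsub hhit
      classical
      obtain ⟨s, rfl⟩ : ∃ s, t = s + 1 := ⟨t - 1, by omega⟩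
      set 𝓕₁ := 𝓕.filter (fun F => a + 1 ∈ F) with h1def
      set 𝓕₀ := 𝓕.filter (fun F => ¬ a + 1 ∈ F) with h0def
      have hsplit : ∑ F ∈ 𝓕, p ^ F.card * (1 - p) ^ (n + 1 - F.card)
          = ∑ F ∈ 𝓕₁, p ^ F.card * (1 - p) ^ (n + 1 - F.card)
          + ∑ F ∈ 𝓕₀, p ^ F.card * (1 - p) ^ (n + 1 - F.card) :=
        (Finset.sum_filter_add_sum_filter_not 𝓕 _ _).symm
      -- the part not containing a+1
      have hsub0 : ∀ F ∈ 𝓕₀, F ⊆ Finset.Icc (a + 1 + 1) (a + 1 + n) := by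
        intro F hF x hx
        rw [Finset.mem_filter] at hF
        have h1 := hsub F hF.1 hx
        rw [Finset.mem_Icc] at h1 ⊢
        have hne : x ≠ a + 1 := fun h => hF.2 (h ▸ hx)
        omega
      have hhit0 : ∀ F ∈ 𝓕₀, ∃ j ∈ Finset.Icc 1 n,
          j + (s + 1 + 1) ≤ 2 * (F ∩ Finset.Icc (a + 1 + 1) (a + 1 + j)).card := by
        intro F hF
        rw [Finset.mem_filter] at hF
        obtain ⟨j, hj, hcard⟩ := hhit F hF.1
        rw [Finset.mem_Icc] at hj
        have hj2 : 2 ≤ j := by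
          by_contra h
          have hj1 : j = 1 := by omega
          subst hj1
          have hemp : F ∩ Finset.Icc (a + 1) (a + 1) = ∅ := by
            rw [Finset.Icc_self]
            exact Finset.inter_singleton_of_notMem hF.2
          rw [hemp] at hcard
          simp at hcard
        have heq : F ∩ Finset.Icc (a + 1) (a + j)
            = F ∩ Finset.Icc (a + 1 + 1) (a + 1 + (j - 1)) := by
          ext x
          simp only [Finset.mem_inter, Finset.mem_Icc]
          constructor
          · rintro ⟨hx, hl, hr⟩
            have hne : x ≠ a + 1 := fun h => hF.2 (h ▸ hx)
            exact ⟨hx, by omega, by omega⟩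
          · rintro ⟨hx, hl, hr⟩
            exact ⟨hx, by omega, by omega⟩
        rw [heq] at hcard
        refine ⟨j - 1, by rw [Finset.mem_Icc]; omega, by omega⟩
      have hcard0 : ∀ F ∈ 𝓕₀, F.card ≤ n := by
        intro F hF
        have hc := Finset.card_le_card (hsub0 F hF)
        rw [Nat.card_Icc] at hc
        omega
      have hS0 : ∑ F ∈ 𝓕₀, p ^ F.card * (1 - p) ^ (n + 1 - F.card)
          = (1 - p) * ∑ F ∈ 𝓕₀, p ^ F.card * (1 - p) ^ (n - F.card) := by
        rw [Finset.mul_sum]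
        apply Finset.sum_congr rfl
        intro F hF
        have h := hcard0 F hF
        have he : n + 1 - F.card = (n - F.card) + 1 := by omega
        rw [he, pow_succ]
        ring
      have hS0le : ∑ F ∈ 𝓕₀, p ^ F.card * (1 - p) ^ (n - F.card)
          ≤ (p / (1 - p)) ^ (s + 1 + 1) :=
        ih (a + 1) (s + 1 + 1) (by omega) 𝓕₀ hsub0 hhit0
      -- the part containing a+1
      set 𝓖 := 𝓕₁.image (fun F => F.erase (a + 1)) with hGdef
      have hinj : ∀ F1 ∈ 𝓕₁, ∀ F2 ∈ 𝓕₁,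
          F1.erase (a + 1) = F2.erase (a + 1) → F1 = F2 := by
        intro F1 h1 F2 h2 he
        rw [Finset.mem_filter] at h1 h2
        rw [← Finset.insert_erase h1.2, he, Finset.insert_erase h2.2]
      have himg : ∑ G ∈ 𝓖, p ^ G.card * (1 - p) ^ (n - G.card)
          = ∑ F ∈ 𝓕₁, p ^ (F.erase (a + 1)).card * (1 - p) ^ (n - (F.erase (a + 1)).card) :=
        Finset.sum_image hinj
      have hS1 : ∑ F ∈ 𝓕₁, p ^ F.card * (1 - p) ^ (n + 1 - F.card)
          = p * ∑ G ∈ 𝓖, p ^ G.card * (1 - p) ^ (n - G.card) := by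
        rw [himg, Finset.mul_sum]
        apply Finset.sum_congr rfl
        intro F hF
        rw [Finset.mem_filter] at hF
        have hm : a + 1 ∈ F := hF.2
        have hce : (F.erase (a + 1)).card = F.card - 1 := Finset.card_erase_of_mem hm
        have hpos : 1 ≤ F.card := Finset.card_pos.mpr ⟨a + 1, hm⟩
        have hle : F.card ≤ n + 1 := by
          have hc := Finset.card_le_card (hsub F hF.1)
          rw [Nat.card_Icc] at hc
          omega
        rw [hce]
        calc p ^ F.card * (1 - p) ^ (n + 1 - F.card)
            = p ^ ((F.card - 1) + 1) * (1 - p) ^ (n - (F.card - 1)) := by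
              congr 2
              · omega
              · omega
          _ = p * (p ^ (F.card - 1) * (1 - p) ^ (n - (F.card - 1))) := by
              rw [pow_succ]; ring
      have hsubG : ∀ G ∈ 𝓖, G ⊆ Finset.Icc (a + 1 + 1) (a + 1 + n) := by
        intro G hG
        obtain ⟨F, hF, rfl⟩ := Finset.mem_image.mp hG
        rw [Finset.mem_filter] at hF
        intro x hx
        rw [Finset.mem_erase] at hx
        have h1 := hsub F hF.1 hx.2
        rw [Finset.mem_Icc] at h1 ⊢
        have hne := hx.1
        omega
      have hGle : ∑ G ∈ 𝓖, p ^ G.card * (1 - p) ^ (n - G.card) ≤ (p / (1 - p)) ^ s := by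
        rcases Nat.eq_zero_or_pos s with hs0 | hs1
        · subst hs0
          have hml := measure_le_one p hp0.le hp1.le (Finset.Icc (a + 1 + 1) (a + 1 + n)) 𝓖 hsubG
          rw [Nat.card_Icc] at hml
          have hn : a + 1 + n + 1 - (a + 1 + 1) = n := by omega
          rw [hn] at hml
          simpa using hml
        · apply ih (a + 1) s hs1 𝓖 hsubG
          intro G hG
          obtain ⟨F, hF, rfl⟩ := Finset.mem_image.mp hG
          rw [Finset.mem_filter] at hF
          obtain ⟨j, hj, hcard⟩ := hhit F hF.1
          rw [Finset.mem_Icc] at hj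
          have hj2 : 2 ≤ j := by
            by_contra h
            have hj1 : j = 1 := by omega
            subst hj1
            have hsubs : F ∩ Finset.Icc (a + 1) (a + 1) ⊆ {a + 1} := by
              rw [Finset.Icc_self]
              exact Finset.inter_subset_right
            have hc := Finset.card_le_card hsubs
            simp only [Finset.card_singleton] at hc
            omega
          have heq : F ∩ Finset.Icc (a + 1) (a + j)
              = insert (a + 1) ((F.erase (a + 1)) ∩ Finset.Icc (a + 1 + 1) (a + 1 + (j - 1))) := by
            ext x
            simp only [Finset.mem_inter, Finset.mem_insert, Finset.mem_erase, Finset.mem_Icc]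
            constructor
            · rintro ⟨hx, hl, hr⟩
              by_cases hxe : x = a + 1
              · left; exact hxe
              · right; exact ⟨⟨hxe, hx⟩, by omega, by omega⟩
            · rintro (rfl | ⟨⟨hne, hx⟩, hl, hr⟩)
              · exact ⟨hF.2, by omega, by omega⟩
              · exact ⟨hx, by omega, by omega⟩
          have hnotmem : a + 1 ∉ (F.erase (a + 1)) ∩ Finset.Icc (a + 1 + 1) (a + 1 + (j - 1)) := by
            simp [Finset.mem_inter, Finset.mem_erase]
          rw [heq, Finset.card_insert_of_notMem hnotmem] at hcard
          refine ⟨j - 1, by rw [Finset.mem_Icc]; omega, by omega⟩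
      -- combine
      have hiden : p * (p / (1 - p)) ^ s + (1 - p) * (p / (1 - p)) ^ (s + 1 + 1)
          = (p / (1 - p)) ^ (s + 1) := by
        have e2 : (p / (1 - p)) ^ (s + 1 + 1) = (p / (1 - p)) ^ s * (p / (1 - p)) ^ 2 := by ring
        have e1 : (p / (1 - p)) ^ (s + 1) = (p / (1 - p)) ^ s * (p / (1 - p)) := by ring
        rw [e2, e1]
        calc p * (p / (1 - p)) ^ s + (1 - p) * ((p / (1 - p)) ^ s * (p / (1 - p)) ^ 2)
            = (p / (1 - p)) ^ s * (p + (1 - p) * (p / (1 - p)) ^ 2) := by ring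
          _ = (p / (1 - p)) ^ s * (p / (1 - p)) := by rw [key]
      rw [hsplit, hS1, hS0]
      calc p * (∑ G ∈ 𝓖, p ^ G.card * (1 - p) ^ (n - G.card))
            + (1 - p) * ∑ F ∈ 𝓕₀, p ^ F.card * (1 - p) ^ (n - F.card)
          ≤ p * (p / (1 - p)) ^ s + (1 - p) * (p / (1 - p)) ^ (s + 1 + 1) :=
            add_le_add (mul_le_mul_of_nonneg_left hGle hp0.le)
              (mul_le_mul_of_nonneg_left hS0le hq.le)
        _ = (p / (1 - p)) ^ (s + 1) := hiden

/-- If every walk in the family hits the line `y = x + t`, then the `p`-biased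
measure of the family is at most `(p/(1-p))^t`. -/
theorem stmt0 (n t : ℕ) (ht : 1 ≤ t) (p : ℝ) (hp0 : 0 < p) (hp1 : p < 1)
    (𝓕 : Finset (Finset ℕ)) (h𝓕 : ∀ F ∈ 𝓕, F ⊆ Finset.Icc 1 n)
    (hhit : ∀ F ∈ 𝓕, ∃ j ∈ Finset.Icc 1 n, j + t ≤ 2 * (F ∩ Finset.Icc 1 j).card) :
    ∑ F ∈ 𝓕, p ^ F.card * (1 - p) ^ (n - F.card) ≤ (p / (1 - p)) ^ t := by
  have := main_lemma p hp0 hp1 n 0 t ht 𝓕 (by simpa using h𝓕) (by simpa using hhit)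
  simpa using this
end

section
/- The number of lattice walks from (0,0) to (x₀, y₀) using unit up-steps and unit right-steps that touch the line y = x + c is exactly binom(x₀ + y₀, y₀ - c), provided 0 < c < y₀ < x₀ + c. Consequently, if every set in a family 𝓕 ⊆ binom([n], k) corresponds to a walk hitting y = x + c, then |𝓕| ≤ binom(n, k - c). -/
/-!
André's reflection principle. Swapping up- and right-steps after the first visit to the line
`y = x + c` turns a walk to `(x₀, y₀)` that hits the line into a walk to `(y₀ - c, x₀ + c)`, and
back. Every walk to `(y₀ - c, x₀ + c)` hits the line, since it starts below it and ends on or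
above it, so the hitting walks are counted by `C(x₀ + y₀, x₀ + c) = C(x₀ + y₀, y₀ - c)`. The
bound for families follows by shifting `[n]` down to `{0, …, n - 1}`.
-/

open Finset
open scoped symmDiff

/-- `2 * #(F ∩ range j) = j + c` says that the first `j` steps of the walk of `F` end on
`y = x + c`. When the walk never hits the line this is `sInf ∅ = 0`. -/
noncomputable def firstHit (c : ℕ) (F : Finset ℕ) : ℕ :=
  sInf {j | 2 * #(F ∩ range j) = j + c}

section FirstHit

variable {c : ℕ} {F : Finset ℕ}

lemma firstHit_spec (h : ∃ j, 2 * #(F ∩ range j) = j + c) :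
    2 * #(F ∩ range (firstHit c F)) = firstHit c F + c :=
  Nat.sInf_mem h

lemma firstHit_le {j : ℕ} (hj : 2 * #(F ∩ range j) = j + c) : firstHit c F ≤ j :=
  Nat.sInf_le hj

lemma not_hit_of_lt_firstHit {j : ℕ} (hj : j < firstHit c F) :
    2 * #(F ∩ range j) ≠ j + c :=
  Nat.notMem_of_lt_sInf (s := {j | 2 * #(F ∩ range j) = j + c}) hj

lemma firstHit_eq_of_inter_range_eq {G : Finset ℕ} (h : ∃ j, 2 * #(F ∩ range j) = j + c)
    (hGF : ∀ j ≤ firstHit c F, G ∩ range j = F ∩ range j) :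
    firstHit c G = firstHit c F := by
  have hG : 2 * #(G ∩ range (firstHit c F)) = firstHit c F + c := by
    rw [hGF _ le_rfl]; exact firstHit_spec h
  refine le_antisymm (firstHit_le hG) (le_of_not_gt fun hlt => ?_)
  have hfirst := firstHit_spec ⟨_, hG⟩
  rw [hGF _ hlt.le] at hfirst
  exact not_hit_of_lt_firstHit hlt hfirst

end FirstHit

/-- A walk ending on or above the line `y = x + c` hits it: `2 * #(F ∩ range j) - j` moves by
one at each step and starts at `0`. -/
lemma exists_hit_of_le (c : ℕ) (F : Finset ℕ) {n : ℕ} (hn : n + c ≤ 2 * #(F ∩ range n)) :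
    ∃ j ≤ n, 2 * #(F ∩ range j) = j + c := by
  induction n with
  | zero => exact ⟨0, le_rfl, by simp at hn ⊢; omega⟩
  | succ n ih =>
    by_cases hprev : n + c ≤ 2 * #(F ∩ range n)
    · obtain ⟨j, hjn, hj⟩ := ih hprev
      exact ⟨j, hjn.trans n.le_succ, hj⟩
    · have hstep : #(F ∩ range (n + 1)) ≤ #(F ∩ range n) + 1 := by
        rw [range_add_one, Finset.insert_inter]
        split_ifs
        exacts [card_insert_le _ _, Nat.le_succ _]
      exact ⟨n + 1, le_rfl, by omega⟩

lemma symmDiff_Ico_inter_range (F : Finset ℕ) {m j : ℕ} (n : ℕ) (hj : j ≤ m) :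
    (F ∆ Ico m n) ∩ range j = F ∩ range j := by
  ext x
  simp only [mem_inter, mem_symmDiff, mem_Ico, mem_range]
  grind

/-- Both sides equal `2 * #(F ∩ range m) + (n - m)`. -/
lemma card_symmDiff_Ico_add_card {n m c : ℕ} {F : Finset ℕ} (hF : F ⊆ range n) (hmn : m ≤ n)
    (hm : 2 * #(F ∩ range m) = m + c) :
    #(F ∆ Ico m n) + #F = n + c := by
  have hsplit : #(F \ Ico m n) = #(F ∩ range m) := by
    congr 1
    ext x
    have := @hF x
    simp only [mem_sdiff, mem_inter, mem_Ico, mem_range] at this ⊢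
    grind
  have hsymm : #(F ∆ Ico m n) = #(F \ Ico m n) + #(Ico m n \ F) :=
    card_union_of_disjoint disjoint_sdiff_sdiff
  have hIco : #(Ico m n \ F) + #(Ico m n ∩ F) = n - m := by
    rw [card_sdiff_add_card_inter, Nat.card_Ico]
  have hF' : #(F \ Ico m n) + #(F ∩ Ico m n) = #F := card_sdiff_add_card_inter _ _
  rw [inter_comm] at hIco
  omega

/-- Swapping up- and right-steps after the first `m` steps is the symmetric difference with
`Ico m n`. -/
noncomputable def reflectAtFirstHit (n c : ℕ) (F : Finset ℕ) : Finset ℕ :=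
  F ∆ Ico (firstHit c F) n

section Reflect

variable {n c : ℕ} {F : Finset ℕ}

lemma reflectAtFirstHit_subset (hF : F ⊆ range n) : reflectAtFirstHit n c F ⊆ range n :=
  symmDiff_le (le_sup_of_le_right hF) (le_sup_of_le_right fun x hx => by
    simp only [mem_Ico, mem_range] at hx ⊢; omega)

lemma firstHit_reflectAtFirstHit (h : ∃ j, 2 * #(F ∩ range j) = j + c) :
    firstHit c (reflectAtFirstHit n c F) = firstHit c F :=
  firstHit_eq_of_inter_range_eq h fun _ hj => symmDiff_Ico_inter_range F n hj

lemma hit_reflectAtFirstHit (h : ∃ j, 2 * #(F ∩ range j) = j + c) :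
    2 * #(reflectAtFirstHit n c F ∩ range (firstHit c F)) = firstHit c F + c := by
  rw [reflectAtFirstHit, symmDiff_Ico_inter_range F n le_rfl]
  exact firstHit_spec h

lemma reflectAtFirstHit_involutive (h : ∃ j, 2 * #(F ∩ range j) = j + c) :
    reflectAtFirstHit n c (reflectAtFirstHit n c F) = F := by
  rw [reflectAtFirstHit, firstHit_reflectAtFirstHit h, reflectAtFirstHit,
    symmDiff_symmDiff_cancel_right]

lemma card_reflectAtFirstHit_add_card (hF : F ⊆ range n)
    (h : ∃ j ≤ n, 2 * #(F ∩ range j) = j + c) :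
    #(reflectAtFirstHit n c F) + #F = n + c := by
  obtain ⟨j, hjn, hj⟩ := h
  exact card_symmDiff_Ico_add_card hF ((firstHit_le hj).trans hjn) (firstHit_spec ⟨j, hj⟩)

end Reflect

open scoped Classical

theorem card_filter_hit_eq_choose (n k c : ℕ) (hk : 2 * k ≤ n + c) :
    #((range n).powersetCard k |>.filter
        fun F => ∃ j ∈ range (n + 1), 2 * #(F ∩ range j) = j + c)
      = n.choose (n + c - k) := by
  have hit_of_mem {F : Finset ℕ} (hF : F ⊆ range n) (hnc : n + c ≤ 2 * #F) :
      ∃ j ≤ n, 2 * #(F ∩ range j) = j + c :=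
    exists_hit_of_le c F (by rwa [inter_eq_left.mpr hF])
  rw [← card_range n, ← card_powersetCard, card_range]
  refine card_bij' (fun F _ => reflectAtFirstHit n c F) (fun G _ => reflectAtFirstHit n c G)
    ?_ ?_ ?_ ?_
  · intro F hF
    simp only [mem_filter, mem_powersetCard, mem_range, Nat.lt_succ_iff] at hF ⊢
    obtain ⟨⟨hsub, hcard⟩, j, hjn, hj⟩ := hF
    have := card_reflectAtFirstHit_add_card hsub ⟨j, hjn, hj⟩
    exact ⟨reflectAtFirstHit_subset hsub, by omega⟩
  · intro G hG
    rw [mem_powersetCard] at hG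
    obtain ⟨hsub, hcard⟩ := hG
    obtain ⟨j, hjn, hj⟩ := hit_of_mem hsub (by omega)
    have := card_reflectAtFirstHit_add_card hsub ⟨j, hjn, hj⟩
    simp only [mem_filter, mem_powersetCard]
    exact ⟨⟨reflectAtFirstHit_subset hsub, by omega⟩, firstHit c G,
      mem_range.mpr (by have := firstHit_le hj; omega), hit_reflectAtFirstHit ⟨j, hj⟩⟩
  · intro F hF
    simp only [mem_filter] at hF
    obtain ⟨-, j, -, hj⟩ := hF
    exact reflectAtFirstHit_involutive ⟨j, hj⟩
  · intro G hG
    rw [mem_powersetCard] at hG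
    obtain ⟨j, -, hj⟩ := hit_of_mem hG.1 (by omega)
    exact reflectAtFirstHit_involutive ⟨j, hj⟩

section ShiftDown

variable {F : Finset ℕ}

lemma image_sub_one_inter_range (hF : ∀ x ∈ F, 1 ≤ x) (j : ℕ) :
    F.image (· - 1) ∩ range j = (F ∩ Icc 1 j).image (· - 1) := by
  ext y
  simp only [mem_inter, mem_image, mem_range, mem_Icc]
  constructor
  · rintro ⟨⟨x, hx, rfl⟩, hxj⟩
    have := hF x hx
    exact ⟨x, ⟨hx, this, by omega⟩, rfl⟩
  · rintro ⟨x, ⟨hx, hx1, hxj⟩, rfl⟩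
    exact ⟨⟨x, hx, rfl⟩, by omega⟩

lemma card_image_sub_one_inter_range (hF : ∀ x ∈ F, 1 ≤ x) (j : ℕ) :
    #(F.image (· - 1) ∩ range j) = #(F ∩ Icc 1 j) := by
  rw [image_sub_one_inter_range hF]
  refine card_image_of_injOn fun a ha b hb hab => ?_
  have := (mem_Icc.mp (mem_inter.mp ha).2).1
  have := (mem_Icc.mp (mem_inter.mp hb).2).1
  omega

lemma image_add_one_image_sub_one (hF : ∀ x ∈ F, 1 ≤ x) :
    (F.image (· - 1)).image (· + 1) = F := by
  rw [image_image]
  conv_rhs => rw [← image_id (s := F)]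
  exact image_congr fun x hx => Nat.sub_add_cancel (hF x hx)

end ShiftDown

theorem card_le_choose_of_forall_hit {n k c : ℕ} (hk : 2 * k ≤ n + c) {𝓕 : Finset (Finset ℕ)}
    (h𝓕 : 𝓕 ⊆ (Icc 1 n).powersetCard k)
    (hhit : ∀ F ∈ 𝓕, ∃ j ∈ range (n + 1), 2 * #(F ∩ Icc 1 j) = j + c) :
    #𝓕 ≤ n.choose (n + c - k) := by
  have hpos {F : Finset ℕ} (hF : F ∈ 𝓕) : ∀ x ∈ F, 1 ≤ x := fun x hx =>
    (mem_Icc.mp ((mem_powersetCard.mp (h𝓕 hF)).1 hx)).1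
  rw [← card_filter_hit_eq_choose n k c hk]
  refine card_le_card_of_injOn (·.image (· - 1)) (fun F hF => ?_) ?_
  · obtain ⟨hsub, hcard⟩ := mem_powersetCard.mp (h𝓕 hF)
    have hrange : F.image (· - 1) ⊆ range n := by
      intro y hy
      obtain ⟨x, hx, rfl⟩ := mem_image.mp hy
      have := mem_Icc.mp (hsub hx)
      exact mem_range.mpr (by omega)
    obtain ⟨j, hjn, hj⟩ := hhit F hF
    have hcard_image := card_image_sub_one_inter_range (hpos hF) n
    rw [inter_eq_left.mpr hrange, inter_eq_left.mpr hsub] at hcard_image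
    simp only [coe_filter, mem_powersetCard, Set.mem_ofPred_eq]
    exact ⟨⟨hrange, hcard_image.trans hcard⟩, j, hjn,
      (card_image_sub_one_inter_range (hpos hF) j).symm ▸ hj⟩
  · exact Set.LeftInvOn.injOn (f₁' := (·.image (· + 1))) fun F hF =>
      image_add_one_image_sub_one (hpos hF)

theorem stmt2_general (x₀ y₀ c : ℕ) (h2 : c < y₀) (h3 : y₀ < x₀ + c) :
    (((Finset.range (x₀ + y₀)).powersetCard y₀).filter
        (fun F => ∃ j ∈ Finset.range (x₀ + y₀ + 1),
          2 * (F ∩ Finset.range j).card = j + c)).card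
      = (x₀ + y₀).choose (y₀ - c)
    ∧ ∀ (n k : ℕ) (𝓕 : Finset (Finset ℕ)), 0 < c → c < k → k < (n - k) + c →
        𝓕 ⊆ (Finset.Icc 1 n).powersetCard k →
        (∀ F ∈ 𝓕, ∃ j ∈ Finset.range (n + 1),
          2 * (F ∩ Finset.Icc 1 j).card = j + c) →
        𝓕.card ≤ n.choose (k - c) := by
  refine ⟨?_, fun n k 𝓕 _ hck hkn h𝓕 hhit => ?_⟩
  · rw [card_filter_hit_eq_choose _ _ _ (by omega)]
    exact Nat.choose_symm_of_eq_add (by omega)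
  · -- `k ≤ n`, since otherwise `n - k = 0` and `k < c`.
    rw [Nat.choose_symm_of_eq_add (show n = (k - c) + (n + c - k) by omega)]
    exact card_le_choose_of_forall_hit (by omega) h𝓕 hhit

/-- The number of lattice walks from `(0,0)` to `(x₀,y₀)` touching the line
`y = x + c` is `C(x₀+y₀, y₀-c)`; consequently a `k`-uniform family all of whose
walks hit `y = x + c` has size at most `C(n, k-c)`. -/
theorem stmt2 (x₀ y₀ c : ℕ) (h1 : 0 < c) (h2 : c < y₀) (h3 : y₀ < x₀ + c) :
    (((Finset.range (x₀ + y₀)).powersetCard y₀).filter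
        (fun F => ∃ j ∈ Finset.range (x₀ + y₀ + 1),
          2 * (F ∩ Finset.range j).card = j + c)).card
      = (x₀ + y₀).choose (y₀ - c)
    ∧ ∀ (n k : ℕ) (𝓕 : Finset (Finset ℕ)), 0 < c → c < k → k < (n - k) + c →
        𝓕 ⊆ (Finset.Icc 1 n).powersetCard k →
        (∀ F ∈ 𝓕, ∃ j ∈ Finset.range (n + 1),
          2 * (F ∩ Finset.Icc 1 j).card = j + c) →
        𝓕.card ≤ n.choose (k - c) :=
  stmt2_general x₀ y₀ c h2 h3
end

section
/- The number of lattice walks from (0,0) to (x₀, y₀) (with unit up/right steps) that never touch the line y = x + c equals binom(x₀+y₀, x₀) − binom(x₀+y₀, y₀ − c), for integers 0 < c < y₀ < x₀ + c. -/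
/-!
Encode a walk of length `n` by the set `F ⊆ range n` of the times of its up-steps: after `j`
steps it has made `#(F ∩ range j)` up-steps, so it touches `y = x + c` at time `j` iff
`2 * #(F ∩ range j) = j + c`. Exchanging up- and right-steps after the first touch is an
involution on touching walks which turns `k` up-steps into `n + c - k`. A walk with `x₀ + c`
up-steps ends on or above the line, so it touches it; hence the touching walks to `(x₀, y₀)` are
as many as all walks with `x₀ + c` up-steps, namely `C(x₀+y₀, y₀-c)`.
-/

open Finset
open scoped symmDiff

theorem exists_eq_of_map_succ_le_add_one (g : ℕ → ℤ) (hg : ∀ j, g (j + 1) ≤ g j + 1) {t : ℤ}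
    {n : ℕ} (h0 : g 0 ≤ t) (hn : t ≤ g n) : ∃ j ≤ n, g j = t := by
  induction n with
  | zero => exact ⟨0, le_rfl, le_antisymm h0 hn⟩
  | succ n ih =>
    by_cases h : t ≤ g n
    · obtain ⟨j, hjn, hj⟩ := ih h
      exact ⟨j, hjn.trans n.le_succ, hj⟩
    · exact ⟨n + 1, le_rfl, by have := hg n; omega⟩

theorem card_inter_range_succ (F : Finset ℕ) (j : ℕ) :
    #(F ∩ range (j + 1)) = #(F ∩ range j) + if j ∈ F then 1 else 0 := by
  rw [range_add_one]
  split_ifs with h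
  · rw [inter_insert_of_mem h, card_insert_of_notMem (by simp)]
  · rw [inter_insert_of_notMem h, add_zero]

theorem symmDiff_Ico_inter_range_of_le (F : Finset ℕ) {a j : ℕ} (n : ℕ) (h : j ≤ a) :
    (F ∆ Ico a n) ∩ range j = F ∩ range j := by
  ext i
  by_cases hi : i ∈ F <;> simp [mem_symmDiff, hi] <;> omega

theorem card_symmDiff_Ico_inter_range_add (F : Finset ℕ) {a j n : ℕ} (haj : a ≤ j) (hjn : j ≤ n) :
    #((F ∆ Ico a n) ∩ range j) + #(F ∩ range j) = 2 * #(F ∩ range a) + (j - a) := by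
  induction j, haj using Nat.le_induction with
  | base => rw [symmDiff_Ico_inter_range_of_le F n le_rfl]; omega
  | succ j haj ih =>
    have hj : j ∈ Ico a n := mem_Ico.2 ⟨haj, by omega⟩
    have hflip : j ∈ F ∆ Ico a n ↔ j ∉ F := by simp only [mem_symmDiff]; tauto
    have := ih (by omega)
    rw [card_inter_range_succ, card_inter_range_succ]
    by_cases hjF : j ∈ F <;> simp only [hflip, hjF, if_true, if_false, not_true_eq_false,
      not_false_eq_true] <;> omega

theorem symmDiff_Ico_subset_range {F : Finset ℕ} {n : ℕ} (a : ℕ) (hF : F ⊆ range n) :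
    F ∆ Ico a n ⊆ range n :=
  symmDiff_le_sup.trans (union_subset hF fun _ hi => mem_range.2 (mem_Ico.1 hi).2)

def TouchesAt (c : ℕ) (F : Finset ℕ) (j : ℕ) : Prop :=
  2 * #(F ∩ range j) = j + c

instance (c : ℕ) (F : Finset ℕ) (j : ℕ) : Decidable (TouchesAt c F j) :=
  inferInstanceAs (Decidable (_ = _))

theorem exists_touchesAt_of_le_two_mul_card {c n : ℕ} {F : Finset ℕ} (hF : F ⊆ range n)
    (h : n + c ≤ 2 * #F) : ∃ j ≤ n, TouchesAt c F j := by
  obtain ⟨j, hjn, hj⟩ := exists_eq_of_map_succ_le_add_one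
    (fun j => 2 * (#(F ∩ range j) : ℤ) - j) (t := c) (n := n)
    (fun j => by rw [card_inter_range_succ]; split_ifs <;> push_cast <;> omega)
    (by simp) (by rw [inter_eq_left.2 hF]; omega)
  exact ⟨j, hjn, by unfold TouchesAt; omega⟩

def IsFirstTouch (c : ℕ) (F : Finset ℕ) (a : ℕ) : Prop :=
  TouchesAt c F a ∧ ∀ j < a, ¬ TouchesAt c F j

theorem exists_isFirstTouch_le {c j : ℕ} {F : Finset ℕ} (h : TouchesAt c F j) :
    ∃ a ≤ j, IsFirstTouch c F a :=
  ⟨Nat.find ⟨j, h⟩, Nat.find_min' _ h, Nat.find_spec _, fun _ => Nat.find_min _⟩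

theorem IsFirstTouch.symmDiff_Ico {c a : ℕ} {F : Finset ℕ} (h : IsFirstTouch c F a) (n : ℕ) :
    IsFirstTouch c (F ∆ Ico a n) a := by
  refine ⟨?_, fun j hj => ?_⟩
  · rw [TouchesAt, symmDiff_Ico_inter_range_of_le F n le_rfl]; exact h.1
  · rw [TouchesAt, symmDiff_Ico_inter_range_of_le F n hj.le]; exact h.2 j hj

open Classical in
noncomputable def reflect (c n : ℕ) (F : Finset ℕ) : Finset ℕ :=
  if h : ∃ j, TouchesAt c F j then F ∆ Ico (Nat.find h) n else F

theorem reflect_eq_of_isFirstTouch {c n a : ℕ} {F : Finset ℕ} (h : IsFirstTouch c F a) :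
    reflect c n F = F ∆ Ico a n := by
  have hex : ∃ j, TouchesAt c F j := ⟨a, h.1⟩
  rw [reflect, dif_pos hex, (Nat.find_eq_iff hex).2 h]

theorem reflect_reflect {c n j : ℕ} {F : Finset ℕ} (h : TouchesAt c F j) :
    reflect c n (reflect c n F) = F := by
  obtain ⟨a, -, ha⟩ := exists_isFirstTouch_le h
  rw [reflect_eq_of_isFirstTouch ha, reflect_eq_of_isFirstTouch (ha.symmDiff_Ico n),
    symmDiff_symmDiff_cancel_right]

def touchingWalks (n c k : ℕ) : Finset (Finset ℕ) :=
  ((range n).powersetCard k).filter fun F => ∃ j ≤ n, TouchesAt c F j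

theorem reflect_mem_touchingWalks {n c k : ℕ} {F : Finset ℕ} (hk : k ≤ n + c)
    (hF : F ∈ touchingWalks n c k) : reflect c n F ∈ touchingWalks n c (n + c - k) := by
  simp only [touchingWalks, mem_filter, mem_powersetCard] at hF ⊢
  obtain ⟨⟨hsub, rfl⟩, j, hj, hjt⟩ := hF
  obtain ⟨a, haj, ha⟩ := exists_isFirstTouch_le hjt
  have hcard := card_symmDiff_Ico_inter_range_add F (n := n) (by omega : a ≤ n) le_rfl
  rw [inter_eq_left.2 hsub, inter_eq_left.2 (symmDiff_Ico_subset_range a hsub)] at hcard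
  rw [reflect_eq_of_isFirstTouch ha]
  have ha1 : 2 * #(F ∩ range a) = a + c := ha.1
  exact ⟨⟨symmDiff_Ico_subset_range a hsub, by omega⟩, a, by omega, (ha.symmDiff_Ico n).1⟩

theorem card_touchingWalks_eq {n c k : ℕ} (hk : k ≤ n + c) :
    #(touchingWalks n c k) = #(touchingWalks n c (n + c - k)) := by
  have hinv : ∀ {m}, ∀ F ∈ touchingWalks n c m, reflect c n (reflect c n F) = F := fun F hF => by
    obtain ⟨j, -, hj⟩ := (mem_filter.1 hF).2
    exact reflect_reflect hj
  refine card_nbij' (reflect c n) (reflect c n) (fun F hF => reflect_mem_touchingWalks hk hF)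
    (fun F hF => ?_) (fun F hF => hinv F hF) (fun F hF => hinv F hF)
  simpa [Nat.sub_sub_self hk] using reflect_mem_touchingWalks (Nat.sub_le _ _) hF

theorem touchingWalks_eq_powersetCard {n c m : ℕ} (h : n + c ≤ 2 * m) :
    touchingWalks n c m = (range n).powersetCard m := by
  refine filter_true_of_mem fun F hF => ?_
  obtain ⟨hsub, rfl⟩ := mem_powersetCard.1 hF
  exact exists_touchesAt_of_le_two_mul_card hsub h

theorem stmt3_general (x₀ y₀ c : ℕ) (h2 : c < y₀) (h3 : y₀ < x₀ + c) :
    (@Finset.filter _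
        (fun F => ∀ j ∈ Finset.range (x₀ + y₀ + 1),
          2 * (F ∩ Finset.range j).card ≠ j + c) (fun _ => Finset.decidableDforallFinset)
        ((Finset.range (x₀ + y₀)).powersetCard y₀)).card
      = (x₀ + y₀).choose x₀ - (x₀ + y₀).choose (y₀ - c) := by
  calc _ = #((range (x₀ + y₀)).powersetCard y₀ \ touchingWalks (x₀ + y₀) c y₀) := by
        congr 1
        ext F
        simp only [touchingWalks, TouchesAt, mem_sdiff, mem_filter, mem_range, Nat.lt_succ_iff]
        grind
    _ = (x₀ + y₀).choose y₀ - #(touchingWalks (x₀ + y₀) c y₀) := by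
        rw [card_sdiff_of_subset (s := touchingWalks _ _ _) (filter_subset _ _),
          card_powersetCard, card_range]
    _ = (x₀ + y₀).choose y₀ - #((range (x₀ + y₀)).powersetCard (x₀ + c)) := by
        rw [card_touchingWalks_eq (by omega), show x₀ + y₀ + c - y₀ = x₀ + c by omega,
          touchingWalks_eq_powersetCard (by omega)]
    _ = (x₀ + y₀).choose x₀ - (x₀ + y₀).choose (y₀ - c) := by
        rw [card_powersetCard, card_range, Nat.choose_symm_add,
          Nat.choose_symm_of_eq_add (by omega : x₀ + y₀ = x₀ + c + (y₀ - c))]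

/-- The number of lattice walks from `(0,0)` to `(x₀,y₀)` that never touch the
line `y = x + c` equals `C(x₀+y₀, x₀) - C(x₀+y₀, y₀-c)`. -/
theorem stmt3 (x₀ y₀ c : ℕ) (h1 : 0 < c) (h2 : c < y₀) (h3 : y₀ < x₀ + c) :
    (@Finset.filter _
        (fun F => ∀ j ∈ Finset.range (x₀ + y₀ + 1),
          2 * (F ∩ Finset.range j).card ≠ j + c) (fun _ => Finset.decidableDforallFinset)
        ((Finset.range (x₀ + y₀)).powersetCard y₀)).card
      = (x₀ + y₀).choose x₀ - (x₀ + y₀).choose (y₀ - c) :=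
  stmt3_general x₀ y₀ c h2 h3
end

section
/- If G and H are connected non-bipartite (finite simple) graphs, then their direct (tensor) product G ⊗ H is connected and non-bipartite. Moreover, if G is connected and non-bipartite, then G ⊗ K₂ is connected. -/
/-!
A walk can be lengthened by two by going back and forth along an edge, and an odd closed walk
switches parity, so in a connected non-bipartite graph any two vertices are joined by walks of
every sufficiently large length. Walks of equal length in `G` and `H` zip to a walk in `G ⊗ H`;
this gives connectivity of `G ⊗ H`, and zipping two closed walks of a common odd length gives an
odd closed walk in `G ⊗ H`. In `K₂` there are walks between any two vertices of arbitrarily large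
length of the right parity, which is enough for `G ⊗ K₂`.
-/

open Filter SimpleGraph

/-- The direct (tensor) product of two simple graphs. -/
def tensorProd {α β : Type*} (G : SimpleGraph α) (H : SimpleGraph β) :
    SimpleGraph (α × β) where
  Adj a b := G.Adj a.1 b.1 ∧ H.Adj a.2 b.2
  symm := by
    constructor
    intro a b h
    exact ⟨h.1.symm, h.2.symm⟩
  loopless := by
    constructor
    intro a h
    exact G.irrefl h.1

namespace SimpleGraph

variable {V : Type*} {G : SimpleGraph V}

lemma exists_loop_length_two_mul {u x : V} (h : G.Adj u x) (k : ℕ) :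
    ∃ q : G.Walk u u, q.length = 2 * k := by
  induction k with
  | zero => exact ⟨Walk.nil, rfl⟩
  | succ k ih =>
    obtain ⟨q, hq⟩ := ih
    exact ⟨Walk.cons h (Walk.cons h.symm q), by simp only [Walk.length_cons, hq]; ring⟩

lemma Walk.exists_loop_length_eq_of_odd {u : V} (c : G.Walk u u) (hc : Odd c.length) {n : ℕ}
    (hn : c.length ≤ n) : ∃ q : G.Walk u u, q.length = n := by
  have hnil : ¬ c.Nil := by
    rw [← Walk.length_eq_zero_iff]
    exact hc.pos.ne'
  have hadj := c.adj_snd hnil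
  rcases Nat.even_or_odd n with ⟨k, hk⟩ | hodd
  · obtain ⟨q, hq⟩ := exists_loop_length_two_mul hadj k
    exact ⟨q, by omega⟩
  · obtain ⟨k, hk⟩ : Even (n - c.length) := Nat.even_sub' hn |>.mpr (iff_of_true hodd hc)
    obtain ⟨q, hq⟩ := exists_loop_length_two_mul hadj k
    exact ⟨c.append q, by rw [Walk.length_append, hq]; omega⟩

lemma Walk.frequently_exists_walk_length_eq {u v x : V} (p : G.Walk u v) (h : G.Adj v x) :
    ∃ᶠ n in atTop, ∃ q : G.Walk u v, q.length = n := by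
  refine frequently_atTop.2 fun N => ?_
  obtain ⟨q, hq⟩ := exists_loop_length_two_mul h N
  exact ⟨p.length + 2 * N, by omega, p.append q, by rw [Walk.length_append, hq]⟩

lemma Preconnected.eventually_exists_walk_length_eq (hG : G.Preconnected)
    (hnb : ¬ G.Colorable 2) (u v : V) : ∀ᶠ n in atTop, ∃ p : G.Walk u v, p.length = n := by
  obtain ⟨w, c, hc⟩ : ∃ w, ∃ c : G.Walk w w, Odd c.length := by
    simpa [two_colorable_iff_forall_loop_even] using hnb
  obtain ⟨p₁⟩ := hG u w
  obtain ⟨p₂⟩ := hG w v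
  filter_upwards [eventually_ge_atTop (p₁.length + c.length + p₂.length)] with n hn
  obtain ⟨q, hq⟩ := c.exists_loop_length_eq_of_odd hc (n := n - p₁.length - p₂.length) (by omega)
  exact ⟨p₁.append (q.append p₂), by simp only [Walk.length_append, hq]; omega⟩

lemma frequently_exists_walk_top_fin_two (i j : Fin 2) :
    ∃ᶠ n in atTop, ∃ p : (⊤ : SimpleGraph (Fin 2)).Walk i j, p.length = n := by
  obtain ⟨p⟩ := preconnected_top i j
  exact p.frequently_exists_walk_length_eq (x := j.rev) (by fin_cases j <;> decide)

end SimpleGraph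

section TensorProd

variable {α β : Type*} {G : SimpleGraph α} {H : SimpleGraph β}

lemma exists_tensorProd_walk_of_length_eq {u u' : α} {v v' : β} (p : G.Walk u u')
    (q : H.Walk v v') (h : p.length = q.length) :
    ∃ w : (tensorProd G H).Walk (u, v) (u', v'), w.length = p.length := by
  induction p generalizing v with
  | nil => cases q with
    | nil => exact ⟨Walk.nil, rfl⟩
    | cons => simp at h
  | cons hG p ih => cases q with
    | nil => simp at h
    | cons hH q =>
      obtain ⟨w, hw⟩ := ih q (by simpa using h)
      exact ⟨Walk.cons (show (tensorProd G H).Adj _ _ from ⟨hG, hH⟩) w, by simp [hw]⟩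

lemma tensorProd_preconnected
    (h : ∀ a b : α × β, ∃ n, (∃ p : G.Walk a.1 b.1, p.length = n) ∧
      ∃ q : H.Walk a.2 b.2, q.length = n) :
    (tensorProd G H).Preconnected := fun a b => by
  obtain ⟨n, ⟨p, hp⟩, q, hq⟩ := h a b
  obtain ⟨w, -⟩ := exists_tensorProd_walk_of_length_eq p q (hp.trans hq.symm)
  exact ⟨w⟩

end TensorProd

theorem stmt8_general {α β : Type*}
    (G : SimpleGraph α) (H : SimpleGraph β)
    (hGc : G.Connected) (hGnb : ¬ G.Colorable 2)
    (hHc : H.Connected) (hHnb : ¬ H.Colorable 2) :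
    (tensorProd G H).Connected ∧ ¬ (tensorProd G H).Colorable 2 ∧
      (tensorProd G (⊤ : SimpleGraph (Fin 2))).Connected := by
  have hG := hGc.preconnected.eventually_exists_walk_length_eq hGnb
  have hH := hHc.preconnected.eventually_exists_walk_length_eq hHnb
  have := hGc.nonempty
  have := hHc.nonempty
  refine ⟨?_, ?_, ?_⟩
  · exact Connected.mk (tensorProd_preconnected fun a b => ((hG a.1 b.1).and (hH a.2 b.2)).exists)
  · obtain ⟨u⟩ := hGc.nonempty
    obtain ⟨v⟩ := hHc.nonempty
    obtain ⟨N, hN⟩ := ((hG u u).and (hH v v)).exists_forall_of_atTop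
    obtain ⟨⟨p, hp⟩, q, hq⟩ := hN (2 * N + 1) (by omega)
    obtain ⟨w, hw⟩ := exists_tensorProd_walk_of_length_eq p q (hp.trans hq.symm)
    rw [two_colorable_iff_forall_loop_even]
    intro hEven
    simpa [hw, hp] using hEven _ w
  · exact Connected.mk (tensorProd_preconnected fun a b =>
      ((hG a.1 b.1).and_frequently (frequently_exists_walk_top_fin_two a.2 b.2)).exists)

/-- If `G` and `H` are connected non-bipartite finite simple graphs, then `G ⊗ H`
is connected and non-bipartite; moreover `G ⊗ K₂` is connected. -/
theorem stmt8 {α β : Type*} [Fintype α] [Fintype β]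
    (G : SimpleGraph α) (H : SimpleGraph β)
    (hGc : G.Connected) (hGnb : ¬ G.Colorable 2)
    (hHc : H.Connected) (hHnb : ¬ H.Colorable 2) :
    (tensorProd G H).Connected ∧ ¬ (tensorProd G H).Colorable 2 ∧
      (tensorProd G (⊤ : SimpleGraph (Fin 2))).Connected :=
  stmt8_general G H hGc hGnb hHc hHnb
end

section
/- For n ≥ 3, t ≥ 2, 0 ≤ ℓ ≤ k − t: if 𝓐 and 𝓑 are cross t-intersecting families in 2^[n] and, for some 1 ≤ i < j ≤ n, s_{ij}(𝓐) = s_{ij}(𝓑) = 𝓕_ℓ^t(n), then 𝓐 = 𝓑 and 𝓐 is isomorphic to 𝓕_ℓ^t(n) (i.e., equal to it up to a permutation of [n]). -/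
open Finset

/-- The `(i,j)`-shift of a single set relative to a family. -/
def shiftSet (𝓖 : Finset (Finset ℕ)) (i j : ℕ) (G : Finset ℕ) : Finset ℕ :=
  if j ∈ G ∧ i ∉ G ∧ insert i (G.erase j) ∉ 𝓖 then insert i (G.erase j) else G

/-- The `(i,j)`-shift of a family. -/
def shiftFam (i j : ℕ) (𝓖 : Finset (Finset ℕ)) : Finset (Finset ℕ) :=
  𝓖.image (shiftSet 𝓖 i j)

/-- The non-uniform Frankl family `𝓕_ℓ^t(n) = {F ⊆ [n] : |F ∩ [t+2ℓ]| ≥ t+ℓ}`. -/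
def franklFam (n t ℓ : ℕ) : Finset (Finset ℕ) :=
  ((Finset.Icc 1 n).powerset).filter
    (fun F => t + ℓ ≤ (F ∩ Finset.Icc 1 (t + 2 * ℓ)).card)

/-- Two families of subsets of `[n]` are isomorphic if one is the image of the
other under a permutation of `[n]`. -/
def FamIso (n : ℕ) (𝓐 𝓑 : Finset (Finset ℕ)) : Prop :=
  ∃ σ : Equiv.Perm ℕ, (∀ x ∈ Finset.Icc 1 n, σ x ∈ Finset.Icc 1 n) ∧
    𝓐 = 𝓑.image (fun B => B.image σ)

/-!
If `𝓐` and `𝓑` lie inside `𝓕 = 𝓕_ℓ^t(n)` they are equal to it, since shifting does not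
increase the size of a family. Otherwise some member of, say, `𝓐` was moved by the shift,
which forces `i ≤ t + 2ℓ < j`. Put `W = [t + 2ℓ] \ {i}`. For `Y ⊆ W` with `|Y| = t + ℓ - 1`,
the set `Y ∪ {i}` of `𝓕` is missing from `𝓑` as soon as a member of `𝓐` avoiding `i` meets `Y`
in fewer than `t` points, and then `Y ∪ {j} ∈ 𝓑`. Bouncing between `𝓐` and `𝓑` along
single-element exchanges puts every such `Y ∪ {j}` into both families. Cross-intersection then
rules out every `F` with `i ∈ F`, `j ∉ F`, `|F ∩ [t + 2ℓ]| = t + ℓ`, and a count identifies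
both families with the image of `𝓕` under the transposition `(i j)`.
-/

namespace Finset

variable {α : Type*} [DecidableEq α]

theorem card_insert_inter_of_notMem {x : α} {A : Finset α} (hx : x ∉ A) (M : Finset α) :
    (insert x A ∩ M).card = (A ∩ M).card + if x ∈ M then 1 else 0 := by
  split_ifs with hxM
  · rw [insert_inter_of_mem hxM, card_insert_of_notMem fun h => hx (mem_inter.1 h).1]
  · rw [insert_inter_of_notMem hxM, add_zero]

theorem card_insert_erase_inter {x y : α} {A : Finset α} (hx : x ∈ A) (hy : y ∉ A)
    (M : Finset α) :
    (insert y (A.erase x) ∩ M).card + (if x ∈ M then 1 else 0) =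
      (A ∩ M).card + if y ∈ M then 1 else 0 := by
  have h1 := card_insert_inter_of_notMem (fun h => hy (mem_of_mem_erase h) : y ∉ A.erase x) M
  have h2 := card_insert_inter_of_notMem (notMem_erase x A) M
  rw [insert_erase hx] at h2
  omega

theorem swap_apply_mem {N : Finset α} {i j x : α} (hi : i ∈ N) (hj : j ∈ N) (hx : x ∈ N) :
    Equiv.swap i j x ∈ N := by
  rw [Equiv.swap_apply_def]
  split_ifs <;> assumption

theorem image_swap_subset {N A : Finset α} {i j : α} (hi : i ∈ N) (hj : j ∈ N) (hA : A ⊆ N) :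
    A.image (Equiv.swap i j) ⊆ N :=
  image_subset_iff.2 fun _ hx => swap_apply_mem hi hj (hA hx)

theorem image_swap_of_mem_iff {A : Finset α} {i j : α} (h : i ∈ A ↔ j ∈ A) :
    A.image (Equiv.swap i j) = A := by
  ext x
  simp only [mem_image]
  grind [Equiv.swap_apply_self]

theorem image_swap_of_mem_of_notMem {A : Finset α} {i j : α} (hi : i ∈ A) (hj : j ∉ A) :
    A.image (Equiv.swap i j) = insert j (A.erase i) := by
  ext x
  simp only [mem_image, mem_insert, mem_erase]
  grind [Equiv.swap_apply_self]

/-- Any two `k`-subsets of `W` are joined by a chain of single-element exchanges inside `W`. -/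
theorem exchange_induction {W : Finset α} {P : Finset α → Prop} {k : ℕ}
    (step : ∀ X ⊆ W, X.card = k → ∀ x ∈ X, ∀ y ∈ W, y ∉ X → P X → P (insert y (X.erase x)))
    {X Y : Finset α} (hX : X ⊆ W) (hY : Y ⊆ W) (hXk : X.card = k) (hYk : Y.card = k)
    (hPX : P X) : P Y := by
  induction h : (Y \ X).card generalizing X with
  | zero =>
    have hYX : Y ⊆ X := sdiff_eq_empty_iff_subset.1 (card_eq_zero.1 h)
    rwa [eq_of_subset_of_card_le hYX (by omega)]
  | succ m ih =>
    obtain ⟨y, hy⟩ : (Y \ X).Nonempty := card_pos.1 (by omega)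
    obtain ⟨x, hx⟩ : (X \ Y).Nonempty := card_pos.1 (by rw [card_sdiff_comm (by omega)]; omega)
    rw [mem_sdiff] at hx hy
    have hyX : y ∉ X.erase x := fun h => hy.2 (mem_of_mem_erase h)
    refine ih (insert_subset (hY hy.1) ((erase_subset _ _).trans hX)) ?_
      (step X hX hXk x hx.1 y (hY hy.1) hy.2 hPX) ?_
    · rw [card_insert_of_notMem hyX, card_erase_of_mem hx.1]
      have := card_pos.2 ⟨x, hx.1⟩
      omega
    · have : Y \ insert y (X.erase x) = (Y \ X).erase y := by
        ext a
        simp only [mem_sdiff, mem_insert, mem_erase]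
        grind
      rw [this, card_erase_of_mem (mem_sdiff.2 hy), h, Nat.add_sub_cancel]

/-- Keeping `s` points of `C` and adding all of `W \ C` gives a set that meets every
one-point extension of `C` in at most `s + 1` points. -/
theorem exists_card_inter_insert_le {W C : Finset α} (hC : C ⊆ W) {s : ℕ} (hs : s ≤ C.card) :
    ∃ Z ⊆ W, Z.card + C.card = W.card + s ∧ ∀ x, (insert x C ∩ Z).card ≤ s + 1 := by
  obtain ⟨S, hSC, hSc⟩ := exists_subset_card_eq hs
  refine ⟨(W \ C) ∪ S, union_subset sdiff_subset (hSC.trans hC), ?_, fun x => ?_⟩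
  · rw [card_union_of_disjoint (sdiff_disjoint.mono_right hSC), hSc,
      ← card_sdiff_add_card_eq_card hC]
    omega
  · calc (insert x C ∩ (W \ C ∪ S)).card ≤ (insert x S).card := by
          apply card_le_card
          intro a
          simp only [mem_inter, mem_insert, mem_union, mem_sdiff]
          grind
      _ ≤ s + 1 := hSc ▸ card_insert_le x S

theorem exists_card_inter_lt {W X : Finset α} {t ℓ : ℕ} (ht : 2 ≤ t)
    (hW : W.card + 1 = t + 2 * ℓ) (hX : X ⊆ W) (hXc : X.card + 1 = t + ℓ) :
    ∃ Z ⊆ W, Z.card + 1 = t + ℓ ∧ (X ∩ Z).card < t := by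
  obtain ⟨x, hx⟩ : X.Nonempty := card_pos.1 (by omega)
  have hCc := card_erase_of_mem hx
  obtain ⟨Z, hZ, hZc, hXZ⟩ :=
    exists_card_inter_insert_le ((erase_subset x X).trans hX) (s := t - 2) (by omega)
  have := hXZ x
  rw [insert_erase hx] at this
  exact ⟨Z, hZ, by omega, by omega⟩

end Finset

section Shift

variable {i j : ℕ} {𝓖 : Finset (Finset ℕ)} {G : Finset ℕ}

theorem card_shiftFam_le : (shiftFam i j 𝓖).card ≤ 𝓖.card := card_image_le

theorem insert_erase_mem_of_mem_shiftFam (hG : G ∈ shiftFam i j 𝓖) (hG𝓖 : G ∉ 𝓖) :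
    insert j (G.erase i) ∈ 𝓖 := by
  obtain ⟨H, hH, rfl⟩ := mem_image.1 hG
  unfold shiftSet at hG𝓖 ⊢
  split_ifs at hG𝓖 ⊢ with hc
  · rwa [erase_insert fun h => hc.2.1 (mem_of_mem_erase h), insert_erase hc.1]
  · exact absurd hH hG𝓖

theorem mem_shiftFam_or (hG : G ∈ 𝓖) :
    G ∈ shiftFam i j 𝓖 ∨ j ∈ G ∧ i ∉ G ∧ insert i (G.erase j) ∈ shiftFam i j 𝓖 := by
  have h : shiftSet 𝓖 i j G ∈ shiftFam i j 𝓖 := mem_image_of_mem _ hG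
  unfold shiftSet at h
  split_ifs at h with hc
  · exact Or.inr ⟨hc.1, hc.2.1, h⟩
  · exact Or.inl h

end Shift

def franklFamSwap (n t ℓ i j : ℕ) : Finset (Finset ℕ) :=
  (franklFam n t ℓ).image fun F => F.image (Equiv.swap i j)

section Frankl

variable {n t ℓ i j : ℕ} {𝓐 𝓑 𝓖 𝓗 : Finset (Finset ℕ)}

theorem cross_inter_symm (hcross : ∀ A ∈ 𝓐, ∀ B ∈ 𝓑, t ≤ (A ∩ B).card) :
    ∀ B ∈ 𝓑, ∀ A ∈ 𝓐, t ≤ (B ∩ A).card := fun B hB A hA =>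
  inter_comm A B ▸ hcross A hA B hB

theorem mem_franklFam {F : Finset ℕ} :
    F ∈ franklFam n t ℓ ↔ F ⊆ Icc 1 n ∧ t + ℓ ≤ (F ∩ Icc 1 (t + 2 * ℓ)).card := by
  simp [franklFam]

theorem famIso_franklFamSwap (hi : i ∈ Icc 1 n) (hj : j ∈ Icc 1 n) :
    FamIso n (franklFamSwap n t ℓ i j) (franklFam n t ℓ) :=
  ⟨Equiv.swap i j, fun _ hx => swap_apply_mem hi hj hx, rfl⟩

theorem card_erase_Icc_add_one (hi : i ∈ Icc 1 (t + 2 * ℓ)) :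
    ((Icc 1 (t + 2 * ℓ)).erase i).card + 1 = t + 2 * ℓ := by
  rw [card_erase_of_mem hi, Nat.card_Icc]
  have := mem_Icc.1 hi
  omega

theorem of_notMem_franklFam (hj : j ∈ Icc 1 n) (hsh : shiftFam i j 𝓖 = franklFam n t ℓ)
    {A : Finset ℕ} (hA : A ∈ 𝓖) (hAF : A ∉ franklFam n t ℓ) :
    i ∈ Icc 1 (t + 2 * ℓ) ∧ j ∉ Icc 1 (t + 2 * ℓ) ∧ i ∉ A ∧
      (A ∩ Icc 1 (t + 2 * ℓ)).card + 1 = t + ℓ := by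
  rcases mem_shiftFam_or (i := i) (j := j) hA with h | ⟨hjA, hiA, hG⟩
  · exact absurd (hsh ▸ h) hAF
  rw [hsh, mem_franklFam] at hG
  have hAn : A ⊆ Icc 1 n := by
    rw [← insert_erase hjA]
    exact insert_subset hj ((subset_insert _ _).trans hG.1)
  have hAc : (A ∩ Icc 1 (t + 2 * ℓ)).card < t + ℓ := by
    by_contra h
    exact hAF (mem_franklFam.2 ⟨hAn, not_lt.1 h⟩)
  have := card_insert_erase_inter hjA hiA (Icc 1 (t + 2 * ℓ))
  refine ⟨?_, ?_, hiA, ?_⟩ <;> split_ifs at this <;> omega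

theorem insert_mem_of_card_inter_lt (hn : t + 2 * ℓ ≤ n) (hi : i ∈ Icc 1 (t + 2 * ℓ))
    (hcross : ∀ A ∈ 𝓐, ∀ B ∈ 𝓑, t ≤ (A ∩ B).card) (hB : shiftFam i j 𝓑 = franklFam n t ℓ)
    {A Y : Finset ℕ} (hA : A ∈ 𝓐) (hiA : i ∉ A) (hY : Y ⊆ (Icc 1 (t + 2 * ℓ)).erase i)
    (hYc : Y.card + 1 = t + ℓ) (hAY : (A ∩ Y).card < t) : insert j Y ∈ 𝓑 := by
  have hiY : i ∉ Y := fun h => notMem_erase i _ (hY h)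
  have hFM : insert i Y ⊆ Icc 1 (t + 2 * ℓ) := insert_subset hi (hY.trans (erase_subset _ _))
  -- `insert i Y ∈ 𝓕_ℓ^t(n)` meets `A` in fewer than `t` points, so it is the shift of `insert j Y`.
  have hF : insert i Y ∈ shiftFam i j 𝓑 := by
    rw [hB, mem_franklFam, inter_eq_left.2 hFM, card_insert_of_notMem hiY]
    exact ⟨hFM.trans (Icc_subset_Icc le_rfl hn), hYc.ge⟩
  have hFB : insert i Y ∉ 𝓑 := fun h => by
    have := hcross A hA _ h
    rw [inter_insert_of_notMem hiA] at this
    omega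
  simpa [erase_insert hiY] using insert_erase_mem_of_mem_shiftFam hF hFB

theorem insert_mem_of_insert_mem (hn : t + 2 * ℓ ≤ n) (hi : i ∈ Icc 1 (t + 2 * ℓ))
    (hj : j ∉ Icc 1 (t + 2 * ℓ)) (hcross : ∀ A ∈ 𝓐, ∀ B ∈ 𝓑, t ≤ (A ∩ B).card)
    (hB : shiftFam i j 𝓑 = franklFam n t ℓ) {X Y : Finset ℕ}
    (hX : X ⊆ (Icc 1 (t + 2 * ℓ)).erase i) (hXA : insert j X ∈ 𝓐)
    (hY : Y ⊆ (Icc 1 (t + 2 * ℓ)).erase i) (hYc : Y.card + 1 = t + ℓ) (hXY : (X ∩ Y).card < t) :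
    insert j Y ∈ 𝓑 := by
  have hiX : i ∉ insert j X := by
    rw [mem_insert, not_or]
    exact ⟨fun h => hj (h ▸ hi), fun h => notMem_erase i _ (hX h)⟩
  refine insert_mem_of_card_inter_lt hn hi hcross hB hXA hiX hY hYc ?_
  rwa [insert_inter_of_notMem fun h => hj (mem_of_mem_erase (hY h))]

theorem insert_mem_of_exchange (ht : 2 ≤ t) (hn : t + 2 * ℓ ≤ n) (hi : i ∈ Icc 1 (t + 2 * ℓ))
    (hj : j ∉ Icc 1 (t + 2 * ℓ)) (hcross : ∀ A ∈ 𝓐, ∀ B ∈ 𝓑, t ≤ (A ∩ B).card)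
    (hA : shiftFam i j 𝓐 = franklFam n t ℓ) (hB : shiftFam i j 𝓑 = franklFam n t ℓ)
    {X : Finset ℕ} (hX : X ⊆ (Icc 1 (t + 2 * ℓ)).erase i) (hXc : X.card + 1 = t + ℓ)
    (hXA : insert j X ∈ 𝓐) {x y : ℕ} (hx : x ∈ X) (hy : y ∈ (Icc 1 (t + 2 * ℓ)).erase i)
    (hyX : y ∉ X) : insert j (insert y (X.erase x)) ∈ 𝓐 := by
  have hC : X.erase x ⊆ (Icc 1 (t + 2 * ℓ)).erase i := (erase_subset _ _).trans hX
  have hCc := card_erase_of_mem hx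
  obtain ⟨Z, hZ, hZc, hCZ⟩ := exists_card_inter_insert_le hC (s := t - 2) (by omega)
  have hWc := card_erase_Icc_add_one hi
  -- `Z` meets both `X` and its exchange in fewer than `t` points: ping-pong through `𝓑`.
  have hZB : insert j Z ∈ 𝓑 := by
    refine insert_mem_of_insert_mem hn hi hj hcross hB hX hXA hZ (by omega) ?_
    have := hCZ x
    rw [insert_erase hx] at this
    omega
  refine insert_mem_of_insert_mem hn hi hj (cross_inter_symm hcross) hA hZ hZB
    (insert_subset hy hC) ?_ ?_
  · rw [card_insert_of_notMem fun h => hyX (mem_of_mem_erase h)]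
    omega
  · rw [inter_comm]
    have := hCZ y
    omega

theorem forall_insert_mem (ht : 2 ≤ t) (hn : t + 2 * ℓ ≤ n) (hi : i ∈ Icc 1 (t + 2 * ℓ))
    (hj : j ∉ Icc 1 (t + 2 * ℓ)) (hcross : ∀ A ∈ 𝓐, ∀ B ∈ 𝓑, t ≤ (A ∩ B).card)
    (hA : shiftFam i j 𝓐 = franklFam n t ℓ) (hB : shiftFam i j 𝓑 = franklFam n t ℓ)
    {X : Finset ℕ} (hX : X ⊆ (Icc 1 (t + 2 * ℓ)).erase i) (hXc : X.card + 1 = t + ℓ)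
    (hXA : insert j X ∈ 𝓐) {Y : Finset ℕ} (hY : Y ⊆ (Icc 1 (t + 2 * ℓ)).erase i)
    (hYc : Y.card + 1 = t + ℓ) : insert j Y ∈ 𝓐 :=
  exchange_induction (P := fun X => insert j X ∈ 𝓐)
    (fun _ hX' hX'c _ hx _ hy hyX' hX'A =>
      insert_mem_of_exchange ht hn hi hj hcross hA hB hX' (by omega) hX'A hx hy hyX')
    hX hY rfl (by omega) hXA

theorem card_inter_ne_of_forall_insert_mem (ht : 2 ≤ t) (hi : i ∈ Icc 1 (t + 2 * ℓ))
    (hcross : ∀ G ∈ 𝓖, ∀ H ∈ 𝓗, t ≤ (G ∩ H).card)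
    (h𝓗 : ∀ Y ⊆ (Icc 1 (t + 2 * ℓ)).erase i, Y.card + 1 = t + ℓ → insert j Y ∈ 𝓗)
    {F : Finset ℕ} (hF : F ∈ 𝓖) (hiF : i ∈ F) (hjF : j ∉ F) :
    (F ∩ Icc 1 (t + 2 * ℓ)).card ≠ t + ℓ := by
  intro hFc
  have hX : (F ∩ Icc 1 (t + 2 * ℓ)).erase i ⊆ (Icc 1 (t + 2 * ℓ)).erase i :=
    erase_subset_erase i inter_subset_right
  have hXc := card_erase_of_mem (mem_inter.2 ⟨hiF, hi⟩)
  obtain ⟨Z, hZ, hZc, hXZ⟩ :=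
    exists_card_inter_lt ht (card_erase_Icc_add_one hi) hX (by omega)
  have hFZ : F ∩ insert j Z ⊆ (F ∩ Icc 1 (t + 2 * ℓ)).erase i ∩ Z := by
    rw [inter_insert_of_notMem hjF]
    intro a ha
    have := hZ (mem_inter.1 ha).2
    simp only [mem_inter, mem_erase] at ha this ⊢
    exact ⟨⟨this.1, ha.1, this.2⟩, ha.2⟩
  have := hcross F hF _ (h𝓗 Z hZ hZc)
  have := card_le_card hFZ
  omega

theorem image_swap_mem_franklFam (hin : i ∈ Icc 1 n) (hjn : j ∈ Icc 1 n)
    (hi : i ∈ Icc 1 (t + 2 * ℓ)) (hj : j ∉ Icc 1 (t + 2 * ℓ)) {A : Finset ℕ}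
    (hA : A ∈ franklFam n t ℓ) (hcrit : i ∈ A → j ∉ A → (A ∩ Icc 1 (t + 2 * ℓ)).card ≠ t + ℓ) :
    A.image (Equiv.swap i j) ∈ franklFam n t ℓ := by
  rw [mem_franklFam] at hA ⊢
  refine ⟨image_swap_subset hin hjn hA.1, ?_⟩
  by_cases hiA : i ∈ A <;> by_cases hjA : j ∈ A
  · rw [image_swap_of_mem_iff (iff_of_true hiA hjA)]
    exact hA.2
  · have := card_insert_erase_inter hiA hjA (Icc 1 (t + 2 * ℓ))
    rw [if_pos hi, if_neg hj] at this
    rw [image_swap_of_mem_of_notMem hiA hjA]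
    have := hcrit hiA hjA
    omega
  · have := card_insert_erase_inter hjA hiA (Icc 1 (t + 2 * ℓ))
    rw [if_pos hi, if_neg hj] at this
    rw [Equiv.swap_comm, image_swap_of_mem_of_notMem hjA hiA]
    omega
  · rw [image_swap_of_mem_iff (iff_of_false hiA hjA)]
    exact hA.2

theorem eq_franklFamSwap (hin : i ∈ Icc 1 n) (hjn : j ∈ Icc 1 n) (hi : i ∈ Icc 1 (t + 2 * ℓ))
    (hj : j ∉ Icc 1 (t + 2 * ℓ)) (hsh : shiftFam i j 𝓖 = franklFam n t ℓ)
    (hcrit : ∀ F ∈ 𝓖, i ∈ F → j ∉ F → (F ∩ Icc 1 (t + 2 * ℓ)).card ≠ t + ℓ) :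
    𝓖 = franklFamSwap n t ℓ i j := by
  refine eq_of_subset_of_card_le (fun A hA => ?_) (card_image_le.trans (hsh ▸ card_shiftFam_le))
  refine mem_image.2 ⟨A.image (Equiv.swap i j), ?_, by simp [image_image, Function.comp_def]⟩
  rcases mem_shiftFam_or (i := i) (j := j) hA with hAF | ⟨hjA, hiA, hσA⟩
  · exact image_swap_mem_franklFam hin hjn hi hj (hsh ▸ hAF) (hcrit A hA)
  · rwa [Equiv.swap_comm, image_swap_of_mem_of_notMem hjA hiA, ← hsh]

theorem eq_franklFamSwap_of_notMem (ht : 2 ≤ t) (hin : i ∈ Icc 1 n) (hjn : j ∈ Icc 1 n)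
    (hcross : ∀ A ∈ 𝓐, ∀ B ∈ 𝓑, t ≤ (A ∩ B).card)
    (hA : shiftFam i j 𝓐 = franklFam n t ℓ) (hB : shiftFam i j 𝓑 = franklFam n t ℓ)
    {A₀ : Finset ℕ} (hA₀ : A₀ ∈ 𝓐) (hA₀F : A₀ ∉ franklFam n t ℓ) :
    𝓐 = franklFamSwap n t ℓ i j ∧ 𝓑 = franklFamSwap n t ℓ i j := by
  obtain ⟨hi, hj, hiA₀, hA₀c⟩ := of_notMem_franklFam hjn hA hA₀ hA₀F
  have hn : t + 2 * ℓ ≤ n := by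
    simp only [mem_Icc, not_and, not_le] at hj hjn
    exact (hj hjn.1).le.trans hjn.2
  have hWc := card_erase_Icc_add_one hi
  have hcross' := cross_inter_symm hcross
  have hX₀ : A₀ ∩ Icc 1 (t + 2 * ℓ) ⊆ (Icc 1 (t + 2 * ℓ)).erase i := fun a ha =>
    mem_erase.2 ⟨fun h => hiA₀ (h ▸ (mem_inter.1 ha).1), (mem_inter.1 ha).2⟩
  obtain ⟨Z, hZ, hZc, hA₀Z⟩ := exists_card_inter_lt ht hWc hX₀ hA₀c
  rw [inter_assoc, inter_eq_right.2 (hZ.trans (erase_subset _ _))] at hA₀Z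
  have hZB := insert_mem_of_card_inter_lt (j := j) hn hi hcross hB hA₀ hiA₀ hZ hZc hA₀Z
  have h𝓑 : ∀ Y ⊆ (Icc 1 (t + 2 * ℓ)).erase i, Y.card + 1 = t + ℓ → insert j Y ∈ 𝓑 :=
    fun Y hY hYc => forall_insert_mem ht hn hi hj hcross' hB hA hZ hZc hZB hY hYc
  have h𝓐 : ∀ Y ⊆ (Icc 1 (t + 2 * ℓ)).erase i, Y.card + 1 = t + ℓ → insert j Y ∈ 𝓐 := by
    intro Y hY hYc
    obtain ⟨Z', hZ', hZ'c, hYZ'⟩ := exists_card_inter_lt ht hWc hY hYc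
    exact insert_mem_of_insert_mem hn hi hj hcross' hA hZ' (h𝓑 Z' hZ' hZ'c) hY hYc
      (by rwa [inter_comm])
  exact ⟨eq_franklFamSwap hin hjn hi hj hA fun F hF =>
      card_inter_ne_of_forall_insert_mem ht hi hcross h𝓑 hF,
    eq_franklFamSwap hin hjn hi hj hB fun F hF =>
      card_inter_ne_of_forall_insert_mem ht hi hcross' h𝓐 hF⟩

end Frankl

theorem stmt14_general (n t ℓ i j : ℕ) (ht : 2 ≤ t) (hi : 1 ≤ i) (hij : i < j) (hj : j ≤ n)
    (𝓐 𝓑 : Finset (Finset ℕ))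
    (hcross : ∀ A ∈ 𝓐, ∀ B ∈ 𝓑, t ≤ (A ∩ B).card)
    (hA : shiftFam i j 𝓐 = franklFam n t ℓ)
    (hB : shiftFam i j 𝓑 = franklFam n t ℓ) :
    𝓐 = 𝓑 ∧ FamIso n 𝓐 (franklFam n t ℓ) := by
  have hin : i ∈ Icc 1 n := mem_Icc.2 ⟨hi, by omega⟩
  have hjn : j ∈ Icc 1 n := mem_Icc.2 ⟨by omega, hj⟩
  by_cases hsub : 𝓐 ⊆ franklFam n t ℓ ∧ 𝓑 ⊆ franklFam n t ℓ
  · obtain ⟨rfl, rfl⟩ : 𝓐 = franklFam n t ℓ ∧ 𝓑 = franklFam n t ℓ :=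
      ⟨eq_of_subset_of_card_le hsub.1 (hA ▸ card_shiftFam_le),
        eq_of_subset_of_card_le hsub.2 (hB ▸ card_shiftFam_le)⟩
    exact ⟨rfl, Equiv.refl ℕ, fun _ hx => hx, by simp⟩
  suffices h : 𝓐 = franklFamSwap n t ℓ i j ∧ 𝓑 = franklFamSwap n t ℓ i j by
    exact ⟨h.1.trans h.2.symm, h.1 ▸ famIso_franklFamSwap hin hjn⟩
  rw [not_and_or, not_subset, not_subset] at hsub
  rcases hsub with ⟨A₀, hA₀, hA₀F⟩ | ⟨B₀, hB₀, hB₀F⟩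
  · exact eq_franklFamSwap_of_notMem ht hin hjn hcross hA hB hA₀ hA₀F
  · exact (eq_franklFamSwap_of_notMem ht hin hjn (cross_inter_symm hcross) hB hA hB₀ hB₀F).symm

/-- If two cross `t`-intersecting families both shift to `𝓕_ℓ^t(n)`, then they
are equal and isomorphic to `𝓕_ℓ^t(n)`. -/
theorem stmt14 (n k t ℓ i j : ℕ) (hn : 3 ≤ n) (ht : 2 ≤ t) (htk : t ≤ k)
    (hℓ : ℓ ≤ k - t) (hi : 1 ≤ i) (hij : i < j) (hj : j ≤ n)
    (𝓐 𝓑 : Finset (Finset ℕ))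
    (h𝓐 : ∀ A ∈ 𝓐, A ⊆ Finset.Icc 1 n) (h𝓑 : ∀ B ∈ 𝓑, B ⊆ Finset.Icc 1 n)
    (hcross : ∀ A ∈ 𝓐, ∀ B ∈ 𝓑, t ≤ (A ∩ B).card)
    (hA : shiftFam i j 𝓐 = franklFam n t ℓ)
    (hB : shiftFam i j 𝓑 = franklFam n t ℓ) :
    𝓐 = 𝓑 ∧ FamIso n 𝓐 (franklFam n t ℓ) :=
  stmt14_general n t ℓ i j ht hi hij hj 𝓐 𝓑 hcross hA hB
end
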